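/- Let (Ω, 𝓕, ℙ) be a probability space, 𝓖 ⊆ 𝓕 a sub-σ-algebra, D ∈ 𝓕 an event, and ε > 0 with ℙ(D | 𝓖) ≥ ε almost surely. Let R : Ω → ℝ be a nonnegative bounded measurable function with E[R] = 1 and constants 0 < c₂ ≤ c₁ with c₂ ≤ E[R | 𝓖] ≤ c₁ almost surely. Let B : Ω → ℝ be a bounded 𝓖-measurable function with E[1_D · B] = 0. Then c₂ · E[1_D · B²] ≤ E[R · B²] − (E[R · B])² ≤ (c₁/ε) · E[1_D · B²]. -/

import Mathlib

open MeasureTheory Real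

/-!
Write `a = E[R B]`. Since `E[R] = 1`, the tilted variance equals `E[R (B - a)²]`, and because
`(B - a)²` and `B²` are `𝓖`-measurable, integrating against `R` is the same as integrating
against `E[R | 𝓖] ∈ [c₂, c₁]`. Hence the variance is at least `c₂ E[(B - a)²] ≥ c₂ E[1_D (B - a)²]`,
which is at least `c₂ E[1_D B²]` by the centering `E[1_D B] = 0`; and it is at most
`E[R B²] ≤ c₁ E[B²]`, while `E[1_D B²] = E[ℙ(D | 𝓖) B²] ≥ ε E[B²]`.
-/

section CondExpComparison

variable {Ω : Type*} {m mΩ : MeasurableSpace Ω} {μ : Measure Ω} [IsFiniteMeasure μ]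
  {f g : Ω → ℝ} {C c : ℝ}

theorem integral_condExp_mul_of_bound (hm : m ≤ mΩ) (hf : Integrable f μ)
    (hg : StronglyMeasurable[m] g) (hgC : ∀ᵐ ω ∂μ, ‖g ω‖ ≤ C) :
    ∫ ω, (μ[f|m]) ω * g ω ∂μ = ∫ ω, f ω * g ω ∂μ := by
  have hpull : μ[g * f|m] =ᵐ[μ] g * μ[f|m] := condExp_stronglyMeasurable_mul_of_bound hm hg hf C hgC
  calc ∫ ω, (μ[f|m]) ω * g ω ∂μ = ∫ ω, (μ[g * f|m]) ω ∂μ :=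
        integral_congr_ae (hpull.mono fun ω h => (h.trans (mul_comm _ _)).symm)
    _ = ∫ ω, g ω * f ω ∂μ := integral_condExp hm
    _ = ∫ ω, f ω * g ω ∂μ := integral_congr_ae (ae_of_all _ fun ω => mul_comm _ _)

theorem mul_integral_le_integral_mul_of_le_condExp (hm : m ≤ mΩ) (hf : Integrable f μ)
    (hg : StronglyMeasurable[m] g) (hg0 : ∀ ω, 0 ≤ g ω) (hgC : ∀ᵐ ω ∂μ, ‖g ω‖ ≤ C)
    (hc : ∀ᵐ ω ∂μ, c ≤ (μ[f|m]) ω) :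
    c * ∫ ω, g ω ∂μ ≤ ∫ ω, f ω * g ω ∂μ := by
  have hgm := (hg.mono hm).aestronglyMeasurable (μ := μ)
  rw [← integral_condExp_mul_of_bound hm hf hg hgC, ← integral_const_mul]
  refine integral_mono_ae ((Integrable.of_bound hgm C hgC).const_mul c)
    (integrable_condExp.mul_bdd hgm hgC) ?_
  filter_upwards [hc] with ω hω
  exact mul_le_mul_of_nonneg_right hω (hg0 ω)

theorem integral_mul_le_mul_integral_of_condExp_le (hm : m ≤ mΩ) (hf : Integrable f μ)
    (hg : StronglyMeasurable[m] g) (hg0 : ∀ ω, 0 ≤ g ω) (hgC : ∀ᵐ ω ∂μ, ‖g ω‖ ≤ C)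
    (hc : ∀ᵐ ω ∂μ, (μ[f|m]) ω ≤ c) :
    ∫ ω, f ω * g ω ∂μ ≤ c * ∫ ω, g ω ∂μ := by
  have hgm := (hg.mono hm).aestronglyMeasurable (μ := μ)
  rw [← integral_condExp_mul_of_bound hm hf hg hgC, ← integral_const_mul]
  refine integral_mono_ae (integrable_condExp.mul_bdd hgm hgC)
    ((Integrable.of_bound hgm C hgC).const_mul c) ?_
  filter_upwards [hc] with ω hω
  exact mul_le_mul_of_nonneg_right hω (hg0 ω)

theorem mul_integral_le_setIntegral_of_le_condExp_indicator (hm : m ≤ mΩ) {s : Set Ω}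
    (hs : MeasurableSet s) (hg : StronglyMeasurable[m] g) (hg0 : ∀ ω, 0 ≤ g ω)
    (hgC : ∀ᵐ ω ∂μ, ‖g ω‖ ≤ C) (hc : ∀ᵐ ω ∂μ, c ≤ (μ[s.indicator fun _ => (1 : ℝ)|m]) ω) :
    c * ∫ ω, g ω ∂μ ≤ ∫ ω in s, g ω ∂μ := by
  have hind (ω : Ω) : s.indicator (fun _ => 1) ω * g ω = s.indicator g ω := by
    by_cases hω : ω ∈ s <;> simp [hω]
  simpa only [hind, integral_indicator hs] using
    mul_integral_le_integral_mul_of_le_condExp hm ((integrable_const 1).indicator hs) hg hg0 hgC hc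

end CondExpComparison

section WeightedSecondMoment

variable {Ω : Type*} {mΩ : MeasurableSpace Ω} {ν : Measure Ω} {w B : Ω → ℝ}

theorem integral_mul_sub_sq (a : ℝ) (hw : Integrable w ν)
    (hwB : Integrable (fun ω => w ω * B ω) ν) (hwB2 : Integrable (fun ω => w ω * B ω ^ 2) ν) :
    ∫ ω, w ω * (B ω - a) ^ 2 ∂ν
      = ∫ ω, w ω * B ω ^ 2 ∂ν - 2 * a * ∫ ω, w ω * B ω ∂ν + a ^ 2 * ∫ ω, w ω ∂ν := by
  have hexp : (fun ω => w ω * (B ω - a) ^ 2)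
      = fun ω => w ω * B ω ^ 2 - 2 * a * (w ω * B ω) + a ^ 2 * w ω := by
    funext ω; ring
  rw [hexp, integral_add ?sub (hw.const_mul _), integral_sub hwB2 (hwB.const_mul _),
    integral_const_mul, integral_const_mul]
  exact hwB2.sub (hwB.const_mul _)

theorem integral_sq_le_integral_sub_sq_of_integral_eq_zero [IsFiniteMeasure ν] (a : ℝ)
    (hB : Integrable B ν) (hB2 : Integrable (fun ω => B ω ^ 2) ν) (hB0 : ∫ ω, B ω ∂ν = 0) :
    ∫ ω, B ω ^ 2 ∂ν ≤ ∫ ω, (B ω - a) ^ 2 ∂ν := by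
  have h := integral_mul_sub_sq (w := fun _ => (1 : ℝ)) a (integrable_const 1)
    (by simpa using hB) (by simpa using hB2)
  simp only [one_mul, hB0, integral_const, smul_eq_mul, mul_one] at h
  rw [h]
  nlinarith [measureReal_nonneg (μ := ν) (s := Set.univ), sq_nonneg a]

end WeightedSecondMoment

theorem tilted_variance_two_sided_bound_general
    {Ω : Type*} {m 𝓕 : MeasurableSpace Ω} (hm : m ≤ 𝓕)
    (μ : @MeasureTheory.Measure Ω 𝓕) [IsProbabilityMeasure μ]
    (D : Set Ω) (hD : MeasurableSet[𝓕] D)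
    (ε : ℝ) (hε : 0 < ε)
    (hDcond : ∀ᵐ ω ∂μ, ε ≤ (μ[D.indicator (fun _ => (1 : ℝ)) | m]) ω)
    (R : Ω → ℝ) (hRmeas : Measurable[𝓕] R)
    (hRbd : ∃ M, ∀ ω, |R ω| ≤ M)
    (hRmean : ∫ ω, R ω ∂μ = 1)
    (c₁ c₂ : ℝ) (hc₂ : 0 < c₂) (hc₂₁ : c₂ ≤ c₁)
    (hRcond : ∀ᵐ ω ∂μ, c₂ ≤ (μ[R | m]) ω ∧ (μ[R | m]) ω ≤ c₁)
    (B : Ω → ℝ) (hBmeas : Measurable[m] B) (hBbd : ∃ M, ∀ ω, |B ω| ≤ M)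
    (hBcent : ∫ ω in D, B ω ∂μ = 0) :
    c₂ * ∫ ω in D, (B ω) ^ 2 ∂μ
      ≤ (∫ ω, R ω * (B ω) ^ 2 ∂μ) - (∫ ω, R ω * B ω ∂μ) ^ 2 ∧
    (∫ ω, R ω * (B ω) ^ 2 ∂μ) - (∫ ω, R ω * B ω ∂μ) ^ 2
      ≤ (c₁ / ε) * ∫ ω in D, (B ω) ^ 2 ∂μ := by
  obtain ⟨MR, hMR⟩ := hRbd
  obtain ⟨MB, hMB⟩ := hBbd
  set a := ∫ ω, R ω * B ω ∂μ
  have hB2m : Measurable[m] fun ω => B ω ^ 2 := hBmeas.pow_const 2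
  have hBam : Measurable[m] fun ω => (B ω - a) ^ 2 := (hBmeas.sub_const a).pow_const 2
  have hB2C : ∀ ω, ‖B ω ^ 2‖ ≤ MB ^ 2 := fun ω => by
    simpa using pow_le_pow_left₀ (abs_nonneg _) (hMB ω) 2
  have hBaC : ∀ ω, ‖(B ω - a) ^ 2‖ ≤ (MB + |a|) ^ 2 := fun ω => by
    simpa using pow_le_pow_left₀ (abs_nonneg _) ((abs_sub _ _).trans (add_le_add_left (hMB ω) _)) 2
  have hR : Integrable R μ := .of_bound hRmeas.aestronglyMeasurable MR (ae_of_all _ hMR)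
  have hB : Integrable B μ :=
    .of_bound (hBmeas.mono hm le_rfl).aestronglyMeasurable MB (ae_of_all _ hMB)
  have hB2 : Integrable (fun ω => B ω ^ 2) μ :=
    .of_bound (hB2m.mono hm le_rfl).aestronglyMeasurable _ (ae_of_all _ hB2C)
  have hBa : Integrable (fun ω => (B ω - a) ^ 2) μ :=
    .of_bound (hBam.mono hm le_rfl).aestronglyMeasurable _ (ae_of_all _ hBaC)
  have hvar : ∫ ω, R ω * (B ω - a) ^ 2 ∂μ = ∫ ω, R ω * B ω ^ 2 ∂μ - a ^ 2 := by
    rw [integral_mul_sub_sq a hR (hR.mul_bdd hB.1 (ae_of_all _ hMB))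
      (hR.mul_bdd hB2.1 (ae_of_all _ hB2C)), hRmean]
    ring
  have hD_lower : ε * ∫ ω, B ω ^ 2 ∂μ ≤ ∫ ω in D, B ω ^ 2 ∂μ :=
    mul_integral_le_setIntegral_of_le_condExp_indicator hm hD hB2m.stronglyMeasurable
      (fun _ => sq_nonneg _) (ae_of_all _ hB2C) hDcond
  constructor
  · calc c₂ * ∫ ω in D, B ω ^ 2 ∂μ ≤ c₂ * ∫ ω in D, (B ω - a) ^ 2 ∂μ :=
          mul_le_mul_of_nonneg_left (integral_sq_le_integral_sub_sq_of_integral_eq_zero a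
            hB.integrableOn hB2.integrableOn hBcent) hc₂.le
      _ ≤ c₂ * ∫ ω, (B ω - a) ^ 2 ∂μ :=
          mul_le_mul_of_nonneg_left
            (setIntegral_le_integral hBa (ae_of_all _ fun _ => sq_nonneg _)) hc₂.le
      _ ≤ ∫ ω, R ω * (B ω - a) ^ 2 ∂μ :=
          mul_integral_le_integral_mul_of_le_condExp hm hR hBam.stronglyMeasurable
            (fun _ => sq_nonneg _) (ae_of_all _ hBaC) (hRcond.mono fun _ h => h.1)
      _ = ∫ ω, R ω * B ω ^ 2 ∂μ - a ^ 2 := hvar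
  · calc ∫ ω, R ω * B ω ^ 2 ∂μ - a ^ 2 ≤ ∫ ω, R ω * B ω ^ 2 ∂μ := sub_le_self _ (sq_nonneg _)
      _ ≤ c₁ * ∫ ω, B ω ^ 2 ∂μ :=
          integral_mul_le_mul_integral_of_condExp_le hm hR hB2m.stronglyMeasurable
            (fun _ => sq_nonneg _) (ae_of_all _ hB2C) (hRcond.mono fun _ h => h.2)
      _ = c₁ / ε * (ε * ∫ ω, B ω ^ 2 ∂μ) := by field_simp
      _ ≤ c₁ / ε * ∫ ω in D, B ω ^ 2 ∂μ :=
          mul_le_mul_of_nonneg_left hD_lower (div_nonneg (hc₂.le.trans hc₂₁) hε.le)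

/-- Two-sided bound for the tilted variance (core of the proof of Lemma 7.2 of
"Optimal Estimation for the Functional Cox Model"):
`c₂·E[1_D·B²] ≤ E[R·B²] − (E[R·B])² ≤ (c₁/ε)·E[1_D·B²]`. -/
theorem tilted_variance_two_sided_bound
    {Ω : Type*} {m 𝓕 : MeasurableSpace Ω} (hm : m ≤ 𝓕)
    (μ : @MeasureTheory.Measure Ω 𝓕) [IsProbabilityMeasure μ]
    (D : Set Ω) (hD : MeasurableSet[𝓕] D)
    (ε : ℝ) (hε : 0 < ε)
    (hDcond : ∀ᵐ ω ∂μ, ε ≤ (μ[D.indicator (fun _ => (1 : ℝ)) | m]) ω)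
    (R : Ω → ℝ) (hRmeas : Measurable[𝓕] R) (hRnonneg : ∀ ω, 0 ≤ R ω)
    (hRbd : ∃ M, ∀ ω, |R ω| ≤ M)
    (hRmean : ∫ ω, R ω ∂μ = 1)
    (c₁ c₂ : ℝ) (hc₂ : 0 < c₂) (hc₂₁ : c₂ ≤ c₁)
    (hRcond : ∀ᵐ ω ∂μ, c₂ ≤ (μ[R | m]) ω ∧ (μ[R | m]) ω ≤ c₁)
    (B : Ω → ℝ) (hBmeas : Measurable[m] B) (hBbd : ∃ M, ∀ ω, |B ω| ≤ M)
    (hBcent : ∫ ω in D, B ω ∂μ = 0) :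
    c₂ * ∫ ω in D, (B ω) ^ 2 ∂μ
      ≤ (∫ ω, R ω * (B ω) ^ 2 ∂μ) - (∫ ω, R ω * B ω ∂μ) ^ 2 ∧
    (∫ ω, R ω * (B ω) ^ 2 ∂μ) - (∫ ω, R ω * B ω ∂μ) ^ 2
      ≤ (c₁ / ε) * ∫ ω in D, (B ω) ^ 2 ∂μ :=
  tilted_variance_two_sided_bound_general hm μ D hD ε hε hDcond R hRmeas hRbd hRmean c₁ c₂ hc₂ hc₂₁
    hRcond B hBmeas hBbd hBcent
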